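/- arXiv:2102.10851 — 2 statements merged into one kernel-verified Lean document; each statement's English description precedes it below -/
import Mathlib

section
/- Let T be the operator on functions ℂ → ℂ given by (T f)(x) = x · f′(x), and for natural numbers r let f^[r] denote the r-fold iterate of T applied to f. Then for all natural numbers s, r and every x ∈ ℂ with x ∉ {0, 1, −1, i, −i}: (T^[r] (fun x => g(x)^s))(x) = Σ_{j=0}^{r} A(s,r,j) · g(x)^(s−j) · h(x)^j, where the exponent s − j is an integer exponent (zpow). -/
/-!
The Euler operator `T f = x f'` maps `g ↦ h` and `h ↦ g`, so it acts on the Laurent monomials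
`g^a h^b` by `T (g^a h^b) = a g^(a-1) h^(b+1) + b g^(a+1) h^(b-1)`. Applying `T` to
`∑ⱼ A(s,r,j) g^(s-j) h^j` and collecting the coefficient of `g^(s-j) h^j` reproduces exactly the
recurrence defining `A(s,r+1,j)`. Off `{0, ±1, ±i}` the values `x`, `g x`, `h x` are all nonzero,
so the integer powers are differentiable there.
-/

/-- `g(x) = (x + x⁻¹)/2` -/
noncomputable def g (x : ℂ) : ℂ := (x + x⁻¹) / 2

/-- `h(x) = (x - x⁻¹)/2` -/
noncomputable def h (x : ℂ) : ℂ := (x - x⁻¹) / 2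

/-- The triangular array `A(s,r,j)`: `A(s,0,j) = δ_{j,0}` and
`A(s,r+1,j) = (s-(j-1))·A(s,r,j-1) + (j+1)·A(s,r,j+1)`. -/
def A (s : ℕ) : ℕ → ℤ → ℤ
  | 0, j => if j = 0 then 1 else 0
  | r + 1, j => ((s : ℤ) - (j - 1)) * A s r (j - 1) + (j + 1) * A s r (j + 1)

open Finset

lemma A_eq_zero_of_neg (s r : ℕ) {j : ℤ} (hj : j < 0) : A s r j = 0 := by
  induction r generalizing j with
  | zero => rw [A, if_neg (by omega)]
  | succ r ih =>
    rw [A, ih (by omega)]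
    rcases (show j + 1 ≤ 0 by omega).eq_or_lt with hj' | hj'
    · rw [show j = -1 by omega]; ring
    · rw [ih hj']; ring

lemma A_eq_zero_of_lt (s r : ℕ) {j : ℤ} (hj : (r : ℤ) < j) : A s r j = 0 := by
  induction r generalizing j with
  | zero => rw [A, if_neg (by omega)]
  | succ r ih =>
    push_cast at hj
    rw [A, ih (by omega), ih (by omega)]
    ring

lemma sum_range_A_succ_mul (s r : ℕ) (t : ℤ → ℂ) :
    ∑ j ∈ range (r + 2), (A s (r + 1) j : ℂ) * t j
      = ∑ j ∈ range (r + 1), (A s r j : ℂ) * ((s - j) * t (j + 1) + j * t (j - 1)) := by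
  have hlow : (A s r (-1) : ℂ) = 0 := by rw [A_eq_zero_of_neg s r (by norm_num)]; simp
  have htop (k : ℤ) (hk : r < k) : (A s r k : ℂ) = 0 := by rw [A_eq_zero_of_lt s r hk]; simp
  -- The right-hand side is extended to `range (r + 2)`; the two halves of the recurrence are then
  -- matched with it by shifting the index by one in opposite directions.
  have hup : ∑ j ∈ range (r + 2), ((s : ℂ) - (j - 1)) * A s r (j - 1) * t j
      = ∑ j ∈ range (r + 2), (A s r j : ℂ) * ((s - j) * t (j + 1)) := by
    rw [sum_range_succ', sum_range_succ _ (r + 1)]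
    push_cast
    simp only [htop (r + 1) (by omega), zero_sub, hlow, add_sub_cancel_right, mul_zero, zero_mul, add_zero]
    exact sum_congr rfl fun k _ => by ring
  have hdown : ∑ j ∈ range (r + 2), ((j : ℂ) + 1) * A s r (j + 1) * t j
      = ∑ j ∈ range (r + 2), (A s r j : ℂ) * (j * t (j - 1)) := by
    rw [sum_range_succ, sum_range_succ' _ (r + 1)]
    push_cast
    simp only [htop (r + 1 + 1) (by omega), add_sub_cancel_right, mul_zero, zero_mul, add_zero]
    exact sum_congr rfl fun k _ => by ring
  calc ∑ j ∈ range (r + 2), (A s (r + 1) j : ℂ) * t j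
      = ∑ j ∈ range (r + 2), (((s : ℂ) - (j - 1)) * A s r (j - 1) * t j
          + ((j : ℂ) + 1) * A s r (j + 1) * t j) :=
        sum_congr rfl fun j _ => by simp only [A]; push_cast; ring
    _ = ∑ j ∈ range (r + 2), (A s r j : ℂ) * ((s - j) * t (j + 1) + j * t (j - 1)) := by
        simp only [sum_add_distrib, hup, hdown, mul_add]
    _ = _ := by rw [sum_range_succ _ (r + 1), Nat.cast_succ, htop (r + 1) (by omega), zero_mul,
          add_zero]

section Derivatives

variable {x : ℂ}

lemma g_ne_zero (hx : x ≠ 0) (hxI : x ≠ Complex.I) (hxnI : x ≠ -Complex.I) : g x ≠ 0 := by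
  intro hg
  have hsq : (x - Complex.I) * (x + Complex.I) = 0 := by
    unfold g at hg
    field_simp at hg
    linear_combination hg - Complex.I_sq
  rcases mul_eq_zero.mp hsq with hc | hc
  · exact hxI (by linear_combination hc)
  · exact hxnI (by linear_combination hc)

lemma h_ne_zero (hx : x ≠ 0) (hx1 : x ≠ 1) (hxn1 : x ≠ -1) : h x ≠ 0 := by
  intro hh
  have hsq : (x - 1) * (x + 1) = 0 := by
    unfold h at hh
    field_simp at hh
    linear_combination hh
  rcases mul_eq_zero.mp hsq with hc | hc
  · exact hx1 (by linear_combination hc)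
  · exact hxn1 (by linear_combination hc)

lemma hasDerivAt_g (hx : x ≠ 0) : HasDerivAt g (h x / x) x := by
  refine (((hasDerivAt_id x).add (hasDerivAt_inv hx)).div_const 2).congr_deriv ?_
  unfold h
  field_simp
  ring

lemma hasDerivAt_h (hx : x ≠ 0) : HasDerivAt h (g x / x) x := by
  refine (((hasDerivAt_id x).sub (hasDerivAt_inv hx)).div_const 2).congr_deriv ?_
  unfold g
  field_simp
  ring

lemma hasDerivAt_g_zpow_mul_h_zpow (hx : x ≠ 0) (hg : g x ≠ 0) (hh : h x ≠ 0) (a b : ℤ) :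
    HasDerivAt (fun y => g y ^ a * h y ^ b)
      ((a * (g x ^ (a - 1) * h x ^ (b + 1)) + b * (g x ^ (a + 1) * h x ^ (b - 1))) / x) x := by
  refine (((hasDerivAt_zpow a _ (.inl hg)).comp x (hasDerivAt_g hx)).mul
    ((hasDerivAt_zpow b _ (.inl hh)).comp x (hasDerivAt_h hx))).congr_deriv ?_
  simp only [Function.comp_apply]
  rw [zpow_add_one₀ hg, zpow_add_one₀ hh]
  ring

end Derivatives

noncomputable def expansion (s r : ℕ) (y : ℂ) : ℂ :=
  ∑ j ∈ range (r + 1), (A s r j : ℂ) * g y ^ ((s : ℤ) - (j : ℤ)) * h y ^ (j : ℤ)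

lemma hasDerivAt_expansion (s r : ℕ) {x : ℂ} (hx : x ≠ 0) (hg : g x ≠ 0) (hh : h x ≠ 0) :
    HasDerivAt (expansion s r) (expansion s (r + 1) x / x) x := by
  unfold expansion
  simp only [mul_assoc]
  refine (HasDerivAt.fun_sum fun (j : ℕ) _ =>
    (hasDerivAt_g_zpow_mul_h_zpow hx hg hh ((s : ℤ) - j) j).const_mul (A s r j : ℂ)).congr_deriv ?_
  rw [sum_range_A_succ_mul s r fun j => g x ^ ((s : ℤ) - j) * h x ^ j, sum_div]
  refine sum_congr rfl fun j _ => ?_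
  rw [show (s : ℤ) - j - 1 = s - (j + 1) by ring, show (s : ℤ) - j + 1 = s - (j - 1) by ring]
  push_cast
  ring

/-- With `(T f)(x) = x · f'(x)`, the iterate `T^[r]` applied to `g^s` expands as
`∑_{j=0}^r A(s,r,j) · g^(s-j) · h^j` on `ℂ \ {0, 1, -1, i, -i}`. -/
theorem stmt2 (s r : ℕ) (x : ℂ)
    (hx : x ∉ ({0, 1, -1, Complex.I, -Complex.I} : Set ℂ)) :
    ((fun f : ℂ → ℂ => fun y => y * deriv f y)^[r] (fun y => g y ^ s)) x
      = ∑ j ∈ Finset.range (r + 1),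
          (A s r j : ℂ) * g x ^ ((s : ℤ) - (j : ℤ)) * h x ^ (j : ℤ) := by
  set U : Set ℂ := ({0, 1, -1, Complex.I, -Complex.I} : Set ℂ)ᶜ
  have hU : IsOpen U := (Set.toFinite _).isClosed.isOpen_compl
  suffices Set.EqOn ((fun f : ℂ → ℂ => fun y => y * deriv f y)^[r] (fun y => g y ^ s))
      (expansion s r) U from this hx
  induction r with
  | zero => intro y _; simp [expansion, A]
  | succ r ih =>
    intro y hy
    obtain ⟨hy0, hy1, hyn1, hyI, hynI⟩ : y ≠ 0 ∧ y ≠ 1 ∧ y ≠ -1 ∧ y ≠ Complex.I ∧ y ≠ -Complex.I :=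
      by simpa [U, not_or] using hy
    rw [Function.iterate_succ_apply', ih.deriv hU hy,
      (hasDerivAt_expansion s r hy0 (g_ne_zero hy0 hyI hynI) (h_ne_zero hy0 hy1 hyn1)).deriv,
      mul_div_cancel₀ _ hy0]
end

section
/- For all natural numbers s and r, the following identity holds in ℚ: Σ_{i=0}^{r} (s)_{r−i} · Σ_{j≥0} (r)_j · ( Σ_{n≥0} φ(n, i−n, j−2n) ) = s^r, where all inner sums are finite since φ vanishes outside 0 ≤ k ≤ j ≤ n. -/
/-- Auxiliary array realizing the triangular field `φ` on natural-number indices. -/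
def phiN : ℕ → ℕ → ℕ → ℚ
  | 0, j, k => if j = 0 ∧ k = 0 then 1 else 0
  | n + 1, j, k =>
    if k ≤ j ∧ j ≤ n + 1 then
      ((if _hk : k = 0 then 0 else ((n : ℚ) + 2 - (j : ℚ)) * phiN (n + 1) (j - 1) (k - 1))
        + ((k : ℚ) + 1) * phiN n j (k + 1) + phiN n j k) / (2 * ((n : ℚ) + 1) + (k : ℚ))
    else 0
termination_by n j k => (n, j)

/-- The triangular field `φ(n,j,k)` of rational numbers: `φ(n,j,k) = 0` unless
`0 ≤ k ≤ j ≤ n`, `φ(0,0,0) = 1`, and for `0 ≤ k ≤ j ≤ n` with `(n,j,k) ≠ (0,0,0)`,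
`(2n+k)·φ(n,j,k) = (n-j+1)·φ(n,j-1,k-1) + (k+1)·φ(n-1,j,k+1) + φ(n-1,j,k)`. -/
def phi (n j k : ℤ) : ℚ :=
  if 0 ≤ n ∧ 0 ≤ j ∧ 0 ≤ k then phiN n.toNat j.toNat k.toNat else 0

/-!
The diagonal sums `c(i, j) = ∑ₙ φ(n, i - n, j - 2n)` (`phiDiag`) inherit from the recurrence of
`φ` the recurrence `(j + 1) c(i + 1, j + 1) = c(i, j - 1) + (j - i) c(i, j)`, with
`c(0, j) = [j = 0]`. Hence the factorial moments `T(r, i) = ∑ⱼ (r)ⱼ c(i, j)` (`phiMoment`) satisfy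
`T(r, 0) = 1` and `T(r + 1, i + 1) = (r - i) T(r, i) + T(r, i + 1)`, the recurrence of the
Stirling numbers of the second kind: `T(r, i) = S(r, r - i)`. The identity becomes
`s ^ r = ∑ₖ S(r, k) (s)ₖ`.
-/

open Finset

theorem Nat.self_mul_descFactorial (n k : ℕ) :
    n * n.descFactorial k = n.descFactorial (k + 1) + k * n.descFactorial k := by
  rcases le_or_gt k n with h | h
  · rw [descFactorial_succ, ← Nat.add_mul, Nat.sub_add_cancel h]
  · simp [descFactorial_of_lt h]

theorem Nat.sum_stirlingSecond_mul_descFactorial (n x : ℕ) :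
    ∑ k ∈ range (n + 1), stirlingSecond n k * x.descFactorial k = x ^ n := by
  induction n with
  | zero => simp
  | succ n ih =>
    have hshift :
        ∑ k ∈ range (n + 1), (k + 1) * stirlingSecond n (k + 1) * x.descFactorial (k + 1)
          = ∑ k ∈ range (n + 1), k * stirlingSecond n k * x.descFactorial k := by
      rw [sum_range_succ, sum_range_succ', stirlingSecond_eq_zero_of_lt (lt_add_one n)]
      simp
    calc ∑ k ∈ range (n + 2), stirlingSecond (n + 1) k * x.descFactorial k
        = ∑ k ∈ range (n + 1), ((k + 1) * stirlingSecond n (k + 1) + stirlingSecond n k)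
            * x.descFactorial (k + 1) := by
          simp [sum_range_succ' _ (n + 1), stirlingSecond_succ_succ]
      _ = ∑ k ∈ range (n + 1),
            stirlingSecond n k * (x.descFactorial (k + 1) + k * x.descFactorial k) := by
          simp only [add_mul _ _ (x.descFactorial _), mul_add, sum_add_distrib, hshift]
          rw [add_comm]
          congr 1
          exact sum_congr rfl fun k _ => by ring
      _ = x ^ (n + 1) := by
          simp_rw [← self_mul_descFactorial, pow_succ, ← ih, sum_mul]
          exact sum_congr rfl fun k _ => by ring

theorem Finset.sum_range_succ_shift {M : Type*} [AddCommMonoid M] (a : ℕ → M) (n : ℕ)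
    (h₀ : a 0 = 0) (hₙ : a (n + 1) = 0) :
    ∑ j ∈ range (n + 1), a (j + 1) = ∑ j ∈ range (n + 1), a j := by
  rw [sum_range_succ, sum_range_succ' a, h₀, hₙ]

theorem phiN_eq_zero {n j k : ℕ} (h : ¬(k ≤ j ∧ j ≤ n)) : phiN n j k = 0 := by
  cases n <;> rw [phiN] <;> split <;> first | rfl | omega

theorem phi_natCast (n j k : ℕ) : phi n j k = phiN n j k := by
  simp [phi]

theorem phi_eq_zero {n j k : ℤ} (h : ¬(0 ≤ k ∧ k ≤ j ∧ j ≤ n)) : phi n j k = 0 := by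
  unfold phi
  split_ifs
  · exact phiN_eq_zero (by omega)
  · rfl

theorem mul_phiN_succ {n j k : ℕ} (h : k ≤ j ∧ j ≤ n + 1) :
    (2 * ((n : ℚ) + 1) + k) * phiN (n + 1) j k
      = (if k = 0 then 0 else ((n : ℚ) + 2 - j) * phiN (n + 1) (j - 1) (k - 1))
        + ((k : ℚ) + 1) * phiN n j (k + 1) + phiN n j k := by
  rw [phiN, if_pos h, dite_eq_ite, mul_div_cancel₀ _ (by positivity)]

theorem phi_rec_of_mem {n j k : ℤ} (h : 0 ≤ k ∧ k ≤ j ∧ j ≤ n) :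
    (2 * (n : ℚ) + k) * phi n j k
      = ((n : ℚ) - j + 1) * phi n (j - 1) (k - 1)
        + ((k : ℚ) + 1) * phi (n - 1) j (k + 1) + phi (n - 1) j k := by
  obtain ⟨hk, hkj, hjn⟩ := h
  lift k to ℕ using hk
  lift j to ℕ using by omega
  lift n to ℕ using by omega
  rcases n with _ | n
  · obtain ⟨rfl, rfl⟩ : j = 0 ∧ k = 0 := by omega
    simp [phi]
  have := mul_phiN_succ (n := n) (j := j) (k := k) (by omega)
  rcases k with _ | k
  · rw [phi_eq_zero (n := (n + 1 : ℕ)) (j := j - 1) (k := (0 : ℕ) - 1) (by omega)]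
    simp only [if_true, ← phi_natCast] at this
    push_cast at this ⊢
    simp only [add_sub_cancel_right, zero_add]
    linear_combination this
  · obtain ⟨j, rfl⟩ : ∃ j', j = j' + 1 := ⟨j - 1, by omega⟩
    simp only [Nat.add_one_ne_zero, if_false, Nat.add_sub_cancel, ← phi_natCast] at this
    push_cast at this ⊢
    simp only [add_sub_cancel_right]
    linear_combination this

-- At `(0, 0, 0)` the factor `2n + k` vanishes, and off the support every surviving term carries
-- a factor `n - j + 1 = 0` or `k + 1 = 0`.
theorem phi_rec (n j k : ℤ) :
    (2 * (n : ℚ) + k) * phi n j k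
      = ((n : ℚ) - j + 1) * phi n (j - 1) (k - 1)
        + ((k : ℚ) + 1) * phi (n - 1) j (k + 1) + phi (n - 1) j k := by
  by_cases h : 0 ≤ k ∧ k ≤ j ∧ j ≤ n
  · exact phi_rec_of_mem h
  have hjn : ((n : ℚ) - j + 1) * phi n (j - 1) (k - 1) = 0 := by
    rcases eq_or_ne j (n + 1) with rfl | hj
    · simp
    · rw [phi_eq_zero (by omega), mul_zero]
  have hk : ((k : ℚ) + 1) * phi (n - 1) j (k + 1) = 0 := by
    rcases eq_or_ne k (-1) with rfl | hk
    · simp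
    · rw [phi_eq_zero (by omega), mul_zero]
  rw [hjn, hk, phi_eq_zero h, phi_eq_zero (by omega)]
  ring

theorem phi_antidiag_rec (i j n : ℤ) :
    ((j : ℚ) + 1) * phi n (i + 1 - n) (j + 1 - 2 * n)
      = (2 * (n : ℚ) - i) * phi n (i - n) (j - 2 * n)
        + ((j : ℚ) - 2 * (n - 1)) * phi (n - 1) (i - (n - 1)) (j - 2 * (n - 1))
        + phi (n - 1) (i - (n - 1)) (j - 1 - 2 * (n - 1)) := by
  have h := phi_rec n (i + 1 - n) (j + 1 - 2 * n)
  push_cast at h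
  ring_nf at h ⊢
  linear_combination h

def phiDiag (i : ℕ) (j : ℤ) : ℚ :=
  ∑ n ∈ range (i + 1), phi n (i - n) (j - 2 * n)

theorem phiDiag_eq_zero_of_lt {i : ℕ} {j : ℤ} (h : j < i) : phiDiag i j = 0 :=
  sum_eq_zero fun n _ => phi_eq_zero (by omega)

theorem phiDiag_rec (i : ℕ) (j : ℤ) :
    ((j : ℚ) + 1) * phiDiag (i + 1) (j + 1)
      = phiDiag i (j - 1) + ((j : ℚ) - i) * phiDiag i j := by
  set f : ℤ → ℚ := fun n => phi n (i - n) (j - 2 * n)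
  set g : ℤ → ℚ := fun n => phi n (i - n) (j - 1 - 2 * n)
  have hrec (n : ℕ) : ((j : ℚ) + 1) * phi n ((i + 1 : ℕ) - n) (j + 1 - 2 * n)
      = (2 * (n : ℚ) - i) * f n + ((j : ℚ) - 2 * ((n : ℤ) - 1 : ℤ)) * f (n - 1)
        + g (n - 1) := by
    push_cast
    exact phi_antidiag_rec i j n
  have hf_top : f (i + 1) = 0 := phi_eq_zero (by omega)
  have hf_bot : f (-1) = 0 := phi_eq_zero (by omega)
  have hg_bot : g (-1) = 0 := phi_eq_zero (by omega)
  have hmoment : ∑ n ∈ range (i + 1), (2 * (n : ℚ) - i) * f n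
      + ∑ n ∈ range (i + 1), ((j : ℚ) - 2 * n) * f n = ((j : ℚ) - i) * phiDiag i j := by
    rw [phiDiag, mul_sum, ← sum_add_distrib]
    exact sum_congr rfl fun _ _ => by ring
  rw [phiDiag, mul_sum, sum_congr rfl (fun n _ => hrec n), sum_add_distrib, sum_add_distrib,
    sum_range_succ (fun n : ℕ => (2 * (n : ℚ) - i) * f n),
    sum_range_succ' (fun n : ℕ => ((j : ℚ) - 2 * ((n : ℤ) - 1 : ℤ)) * f (n - 1)),
    sum_range_succ' (fun n : ℕ => g (n - 1))]
  simp only [Nat.cast_add_one, add_sub_cancel_right, Nat.cast_zero, zero_sub, hf_top, hf_bot,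
    hg_bot, mul_zero, add_zero]
  push_cast
  rw [← hmoment, phiDiag]
  ring

theorem finsum_phi_antidiag (i j : ℕ) :
    ∑ᶠ n : ℕ, phi n ((i : ℤ) - n) ((j : ℤ) - 2 * n) = phiDiag i j := by
  refine finsum_eq_finsetSum_of_support_subset _ fun n hn => ?_
  by_contra hni
  exact hn (phi_eq_zero (by rw [coe_range, Set.mem_Iio] at hni; omega))

def phiMoment (r i : ℕ) : ℚ :=
  ∑ j ∈ range (r + 1), (r.descFactorial j : ℚ) * phiDiag i j

theorem finsum_descFactorial_mul_phiDiag (r i : ℕ) :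
    ∑ᶠ j : ℕ, (r.descFactorial j : ℚ) * phiDiag i j = phiMoment r i := by
  refine finsum_eq_finsetSum_of_support_subset _ fun j hj => ?_
  by_contra hjr
  exact hj (by simp_all)

theorem phiMoment_zero_right (r : ℕ) : phiMoment r 0 = 1 := by
  rw [phiMoment, sum_eq_single 0]
  · simp [phiDiag, phi, phiN]
  · intro j _ hj
    simp [phiDiag, phi, phiN, hj]
  · simp

theorem phiMoment_eq_zero_of_lt {r i : ℕ} (h : r < i) : phiMoment r i = 0 :=
  sum_eq_zero fun j hj => by
    rw [phiDiag_eq_zero_of_lt (by have := mem_range.mp hj; omega), mul_zero]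

theorem phiMoment_succ_succ (r i : ℕ) :
    phiMoment (r + 1) (i + 1) = ((r : ℚ) - i) * phiMoment r i + phiMoment r (i + 1) := by
  have hdesc (j : ℕ) := congrArg (Nat.cast (R := ℚ)) (Nat.self_mul_descFactorial r j)
  have hsucc (j : ℕ) := congrArg (Nat.cast (R := ℚ)) (Nat.succ_descFactorial_succ r j)
  push_cast at hdesc hsucc
  have hshift_left :
      ∑ j ∈ range (r + 1), (r.descFactorial (j + 1) : ℚ) * phiDiag (i + 1) (j + 1 : ℕ)
        = phiMoment r (i + 1) :=
    sum_range_succ_shift (fun j => (r.descFactorial j : ℚ) * phiDiag (i + 1) j) r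
      (by simp [phiDiag_eq_zero_of_lt]) (by simp)
  have hshift_right : ∑ j ∈ range (r + 1), (r.descFactorial j : ℚ) * phiDiag i (j - 1)
      = ∑ j ∈ range (r + 1), (r.descFactorial (j + 1) : ℚ) * phiDiag i j := by
    refine (sum_range_succ_shift (fun j => (r.descFactorial j : ℚ) * phiDiag i ((j : ℤ) - 1)) r
      (by rw [phiDiag_eq_zero_of_lt (by omega), mul_zero]) (by simp)).symm.trans ?_
    simp
  calc phiMoment (r + 1) (i + 1)
      = ∑ j ∈ range (r + 1),
          ((r + 1).descFactorial (j + 1) : ℚ) * phiDiag (i + 1) (j + 1 : ℕ) := by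
        rw [phiMoment, sum_range_succ', phiDiag_eq_zero_of_lt (by simp), mul_zero, add_zero]
    _ = ∑ j ∈ range (r + 1), (r.descFactorial (j + 1) : ℚ) * phiDiag (i + 1) (j + 1 : ℕ)
        + ∑ j ∈ range (r + 1), (r.descFactorial j : ℚ)
            * (((j : ℤ) + 1 : ℚ) * phiDiag (i + 1) ((j : ℤ) + 1)) := by
        rw [← sum_add_distrib]
        refine sum_congr rfl fun j _ => ?_
        push_cast
        linear_combination phiDiag (i + 1) ((j : ℤ) + 1) * (hsucc j + hdesc j)
    _ = phiMoment r (i + 1) + ∑ j ∈ range (r + 1), (r.descFactorial j : ℚ) * phiDiag i (j - 1)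
        + ∑ j ∈ range (r + 1), ((j : ℚ) - i) * ((r.descFactorial j : ℚ) * phiDiag i j) := by
        simp only [phiDiag_rec, hshift_left, mul_add, sum_add_distrib, add_assoc]
        congr 2
        exact sum_congr rfl fun j _ => by push_cast; ring
    _ = ((r : ℚ) - i) * phiMoment r i + phiMoment r (i + 1) := by
        rw [hshift_right, add_assoc, ← sum_add_distrib, phiMoment.eq_1 r i, mul_sum, add_comm]
        congr 1
        refine sum_congr rfl fun j _ => ?_
        linear_combination -phiDiag i j * hdesc j

theorem phiMoment_eq_stirlingSecond {r i : ℕ} (h : i ≤ r) :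
    phiMoment r i = Nat.stirlingSecond r (r - i) := by
  induction r generalizing i with
  | zero =>
    obtain rfl : i = 0 := by omega
    simp [phiMoment_zero_right]
  | succ r ih =>
    rcases i with _ | i
    · simp [phiMoment_zero_right, Nat.stirlingSecond_self]
    rw [phiMoment_succ_succ, Nat.add_sub_add_right]
    rcases (Nat.le_of_succ_le_succ h).eq_or_lt with rfl | hi
    · simp [phiMoment_eq_zero_of_lt]
    obtain ⟨k, hk⟩ : ∃ k, r - i = k + 1 := ⟨r - i - 1, by omega⟩
    rw [ih hi.le, ih hi, hk, show r - (i + 1) = k by omega, Nat.stirlingSecond_succ_succ,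
      show (r : ℚ) - i = (k + 1 : ℕ) by rw [← hk, Nat.cast_sub hi.le]]
    push_cast
    ring

theorem sum_descFactorial_mul_phiMoment (s r : ℕ) :
    ∑ i ∈ range (r + 1), (s.descFactorial (r - i) : ℚ) * phiMoment r i = (s : ℚ) ^ r := by
  have hreflect :=
    sum_range_reflect (fun k => (Nat.stirlingSecond r k * s.descFactorial k : ℚ)) (r + 1)
  rw [Nat.add_sub_cancel] at hreflect
  rw [sum_congr rfl fun i hi => congrArg _ <|
    phiMoment_eq_stirlingSecond (Nat.lt_succ_iff.mp (mem_range.mp hi))]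
  simp only [mul_comm (s.descFactorial _ : ℚ), Nat.succ_eq_add_one, hreflect]
  exact_mod_cast Nat.sum_stirlingSecond_mul_descFactorial r s

/-- `∑_{i=0}^r (s)_{r-i} · ∑_{j≥0} (r)_j · (∑_{n≥0} φ(n, i-n, j-2n)) = s^r`.
The inner sums are `finsum`s; they have finite support since `φ` vanishes
outside `0 ≤ k ≤ j ≤ n` and `(r)_j = 0` for `j > r`. -/
theorem stmt9 (s r : ℕ) :
    ∑ i ∈ Finset.range (r + 1), (s.descFactorial (r - i) : ℚ)
        * (∑ᶠ j : ℕ, (r.descFactorial j : ℚ)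
            * ∑ᶠ n : ℕ, phi (n : ℤ) ((i : ℤ) - (n : ℤ)) ((j : ℤ) - 2 * (n : ℤ)))
      = (s : ℚ) ^ r := by
  simp only [finsum_phi_antidiag, finsum_descFactorial_mul_phiDiag]
  exact sum_descFactorial_mul_phiMoment s r
end
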